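/- arXiv:1409.0597 — 7 statements merged into one kernel-verified Lean document; each statement's English description precedes it below -/
import Mathlib

section
/- Let G be a finite simple graph in which every vertex is incident to at least one edge, and let w be an injective real-valued weight function on the edges of G. For each vertex v, let sel(v) denote the edge incident to v of minimum weight. Then the spanning subgraph of G whose edge set is { sel(v) : v a vertex of G } is acyclic, i.e., it contains no cycle. -/
/-!
Take a cycle of the selected edges and its edge `sel u` of maximum weight. The vertex `u` lies on
a second edge `f` of the cycle; `f` is an edge of `G` at `u`, so `w (sel u) ≤ w f` by the choice
of `sel u`, while `w f ≤ w (sel u)` by maximality. Injectivity of `w` forces `f = sel u`, a contradiction.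
-/

namespace SimpleGraph.Walk

variable {V : Type*} {G : SimpleGraph V} {a : V} {c : G.Walk a a}

lemma IsCycle.exists_mem_edges_ne_of_mem (hc : c.IsCycle) {e : Sym2 V} (he : e ∈ c.edges)
    {u : V} (hu : u ∈ e) : ∃ f ∈ c.edges, u ∈ f ∧ f ≠ e := by
  obtain ⟨b, rfl⟩ := Sym2.mem_iff_exists.mp hu
  have htwo := hc.ncard_neighborSet_toSubgraph_eq_two (c.fst_mem_support_of_mem_edges he)
  obtain ⟨b', hb', hne⟩ := Set.exists_ne_of_one_lt_ncard (htwo ▸ one_lt_two) b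
  exact ⟨s(u, b'), c.mem_edges_toSubgraph.mp hb', Sym2.mem_mk_left u b',
    fun h ↦ hne (Sym2.congr_right.mp h)⟩

lemma IsCycle.edgeSet_nonempty (hc : c.IsCycle) : c.edgeSet.Nonempty :=
  List.exists_mem_of_length_pos (c.length_edges ▸ by have := hc.three_le_length; omega)

end SimpleGraph.Walk

theorem stmt_0_general {V : Type*} (G : SimpleGraph V)
    (w : Sym2 V → ℝ) (hw : Set.InjOn w G.edgeSet)
    (sel : V → Sym2 V)
    (hsel : ∀ v : V, sel v ∈ G.edgeSet ∧ v ∈ sel v ∧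
      ∀ e ∈ G.edgeSet, v ∈ e → w (sel v) ≤ w e) :
    (SimpleGraph.fromEdgeSet (Set.range sel)).IsAcyclic := by
  intro a c hc
  have hrange : ∀ e ∈ c.edges, e ∈ Set.range sel := fun e he ↦
    (SimpleGraph.edgeSet_fromEdgeSet _ ▸ c.edges_subset_edgeSet he).1
  obtain ⟨e, he, hmax⟩ := c.edgeSet.exists_max_image w c.edges.finite_toSet hc.edgeSet_nonempty
  obtain ⟨u, rfl⟩ := hrange e he
  obtain ⟨f, hf, huf, hfe⟩ := hc.exists_mem_edges_ne_of_mem he (hsel u).2.1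
  obtain ⟨x, rfl⟩ := hrange f hf
  have hle : w (sel u) ≤ w (sel x) := (hsel u).2.2 _ (hsel x).1 huf
  exact hfe (hw (hsel x).1 (hsel u).1 ((hmax _ hf).antisymm hle))

/-- If every vertex of a finite simple graph `G` is incident to at least one edge,
edge weights `w` are injective on the edges of `G`, and `sel v` is the minimum-weight
edge incident to `v`, then the spanning subgraph with edge set `{sel v : v ∈ V}`
is acyclic. -/
theorem stmt_0 {V : Type*} [Fintype V] [DecidableEq V] (G : SimpleGraph V)
    (hinc : ∀ v : V, ∃ e ∈ G.edgeSet, v ∈ e)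
    (w : Sym2 V → ℝ) (hw : Set.InjOn w G.edgeSet)
    (sel : V → Sym2 V)
    (hsel : ∀ v : V, sel v ∈ G.edgeSet ∧ v ∈ sel v ∧
      ∀ e ∈ G.edgeSet, v ∈ e → w (sel v) ≤ w e) :
    (SimpleGraph.fromEdgeSet (Set.range sel)).IsAcyclic :=
  stmt_0_general G w hw sel hsel
end

section
/- Let G be a finite simple graph in which every vertex is incident to at least one edge, let w be an injective real-valued weight function on the edges of G, and for each vertex v let sel(v) denote the edge incident to v of minimum weight. Then every connected component C of the spanning subgraph of G with edge set { sel(v) : v a vertex of G } contains exactly one edge e = {u, v} that is selected by both of its endpoints, i.e., with sel(u) = e and sel(v) = e. -/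
/-!
Every edge of the selection graph is selected by one of its endpoints, and no vertex selects two
edges. Along a path whose first edge is selected by its far endpoint, every later edge is therefore
selected by its far endpoint as well; so a path can join two doubly selected edges only if they
coincide. For existence, take the vertex `v` of a component minimising `w (sel v)`: the other
endpoint `u` of `sel v` lies in the same component and `sel v` is incident to `u`, so
`w (sel u) = w (sel v)`, whence `sel u = sel v` by injectivity.
-/

open SimpleGraph

section

variable {V : Type*}

abbrev selGraph (sel : V → Sym2 V) : SimpleGraph V :=
  fromEdgeSet (Set.range sel)

def IsMutual (sel : V → Sym2 V) (v : V) : Prop :=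
  ∀ x ∈ sel v, sel x = sel v

variable {sel : V → Sym2 V}

lemma isMutual_of_eq {u v : V} {e : Sym2 V}
    (he : e = s(u, v)) (hu : sel u = e) (hv : sel v = e) : IsMutual sel u := by
  intro x hx
  rw [hu, he] at hx
  rcases Sym2.mem_iff.mp hx with rfl | rfl
  · rfl
  · rw [hu, hv]

lemma eq_of_isPath_of_sel_eq_of_isMutual {H : SimpleGraph V}
    (hsel : ∀ ⦃a b⦄, H.Adj a b → sel a = s(a, b) ∨ sel b = s(a, b))
    {c b : V} (p : H.Walk c b) (hp : p.IsPath) {a : V}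
    (ha : a ∉ p.support) (hc : sel c = s(a, c)) (hb : IsMutual sel b) :
    c = b ∧ sel a = sel c := by
  induction p generalizing a with
  | nil => exact ⟨rfl, hb a (hc ▸ Sym2.mem_mk_left a _)⟩
  | @cons c d b hcd p ih =>
    have had : a ≠ d := by
      rintro rfl
      exact ha (List.mem_cons_of_mem _ p.start_mem_support)
    have hne : s(a, c) ≠ s(c, d) := by
      rw [Ne, Sym2.eq_iff]
      rintro (⟨-, h⟩ | ⟨h, -⟩)
      exacts [hcd.ne h, had h]
    have hd : sel d = s(c, d) := (hsel hcd).resolve_left (hc ▸ hne)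
    have hp' := (Walk.cons_isPath_iff _ _).mp hp
    exact absurd (hc ▸ (ih hp'.1 hp'.2 hd hb).2 ▸ hd) hne

lemma sel_eq_of_reachable_of_isMutual {H : SimpleGraph V}
    (hsel : ∀ ⦃a b⦄, H.Adj a b → sel a = s(a, b) ∨ sel b = s(a, b))
    {a b : V} (hab : H.Reachable a b) (ha : IsMutual sel a) (hb : IsMutual sel b) :
    sel a = sel b := by
  obtain ⟨q, hp⟩ := hab.exists_isPath
  cases q with
  | nil => rfl
  | @cons a c b hac q =>
    have hc : sel c = s(a, c) :=
      (hsel hac).elim (fun h => (ha c (h ▸ Sym2.mem_mk_right a c)).trans h) id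
    have hp' := (Walk.cons_isPath_iff _ _).mp hp
    obtain ⟨rfl, h⟩ := eq_of_isPath_of_sel_eq_of_isMutual hsel q hp'.1 hp'.2 hc hb
    exact h

lemma sel_eq_or_sel_eq_of_selGraph_adj (hmem : ∀ v, v ∈ sel v) ⦃a b : V⦄
    (hab : (selGraph sel).Adj a b) : sel a = s(a, b) ∨ sel b = s(a, b) := by
  obtain ⟨⟨y, hy⟩, -⟩ := (fromEdgeSet_adj _).mp hab
  rcases Sym2.mem_iff.mp (hy ▸ hmem y) with rfl | rfl
  exacts [.inl hy, .inr hy]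

lemma selGraph_reachable_of_mem_sel (hmem : ∀ v, v ∈ sel v) {u v : V} (hu : u ∈ sel v) :
    (selGraph sel).Reachable v u := by
  obtain rfl | hvu := eq_or_ne v u
  · rfl
  refine Adj.reachable ((fromEdgeSet_adj _).mpr ⟨?_, hvu⟩)
  exact (Sym2.mem_and_mem_iff hvu).mp ⟨hmem v, hu⟩ ▸ Set.mem_range_self v

lemma exists_isMutual_mem_supp [Finite V] (hmem : ∀ v, v ∈ sel v) {w : Sym2 V → ℝ}
    (hw : Set.InjOn w (Set.range sel)) (hmin : ∀ u v, u ∈ sel v → w (sel u) ≤ w (sel v))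
    (c : (selGraph sel).ConnectedComponent) : ∃ v ∈ c.supp, IsMutual sel v := by
  obtain ⟨v, hvc, hv⟩ := c.supp.exists_min_image (w ∘ sel) c.supp.toFinite c.nonempty_supp
  refine ⟨v, hvc, fun u hu => hw (Set.mem_range_self u) (Set.mem_range_self v) ?_⟩
  have huc : u ∈ c.supp := by
    rw [ConnectedComponent.mem_supp_iff] at hvc ⊢
    exact (ConnectedComponent.sound (selGraph_reachable_of_mem_sel hmem hu)).symm.trans hvc
  exact (hmin u v hu).antisymm (hv u huc)

end

theorem stmt_2_general {V : Type*} [Fintype V] (G : SimpleGraph V)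
    (w : Sym2 V → ℝ) (hw : Set.InjOn w G.edgeSet)
    (sel : V → Sym2 V)
    (hsel : ∀ v : V, sel v ∈ G.edgeSet ∧ v ∈ sel v ∧
      ∀ e ∈ G.edgeSet, v ∈ e → w (sel v) ≤ w e) :
    ∀ c : (SimpleGraph.fromEdgeSet (Set.range sel)).ConnectedComponent,
      ∃! e : Sym2 V,
        e ∈ (SimpleGraph.fromEdgeSet (Set.range sel)).edgeSet ∧
        (∀ x ∈ e, (SimpleGraph.fromEdgeSet (Set.range sel)).connectedComponentMk x = c) ∧
        ∃ u v : V, e = s(u, v) ∧ sel u = e ∧ sel v = e := by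
  have hmem v : v ∈ sel v := (hsel v).2.1
  have hsel_mem : Set.range sel ⊆ G.edgeSet := Set.range_subset_iff.mpr fun v => (hsel v).1
  intro c
  obtain ⟨v, hvc, hv⟩ := exists_isMutual_mem_supp hmem (hw.mono hsel_mem)
    (fun u v hu => (hsel u).2.2 _ (hsel v).1 hu) c
  rw [ConnectedComponent.mem_supp_iff] at hvc
  obtain ⟨u, hu⟩ := Sym2.mem_iff_exists.mp (hmem v)
  refine ⟨sel v, ⟨?_, fun x hx => ?_, v, u, hu, rfl, hv u (hu ▸ Sym2.mem_mk_right v u)⟩, ?_⟩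
  · rw [edgeSet_fromEdgeSet]
    exact ⟨Set.mem_range_self v, G.not_isDiag_of_mem_edgeSet (hsel v).1⟩
  · exact (ConnectedComponent.sound (selGraph_reachable_of_mem_sel hmem hx)).symm.trans hvc
  · rintro e ⟨-, he, u', v', rfl, hu', hv'⟩
    have hreach := ConnectedComponent.exact ((he u' (Sym2.mem_mk_left u' v')).trans hvc.symm)
    rw [← hu']
    exact sel_eq_of_reachable_of_isMutual (sel_eq_or_sel_eq_of_selGraph_adj hmem) hreach
      (isMutual_of_eq rfl hu' hv') hv

/-- With injective edge weights and `sel v` the minimum-weight edge incident to `v`,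
every connected component of the spanning subgraph with edge set `{sel v : v ∈ V}`
contains exactly one edge `e = {u, v}` that is selected by both of its endpoints. -/
theorem stmt_2 {V : Type*} [Fintype V] [DecidableEq V] (G : SimpleGraph V)
    (hinc : ∀ v : V, ∃ e ∈ G.edgeSet, v ∈ e)
    (w : Sym2 V → ℝ) (hw : Set.InjOn w G.edgeSet)
    (sel : V → Sym2 V)
    (hsel : ∀ v : V, sel v ∈ G.edgeSet ∧ v ∈ sel v ∧
      ∀ e ∈ G.edgeSet, v ∈ e → w (sel v) ≤ w e) :
    ∀ c : (SimpleGraph.fromEdgeSet (Set.range sel)).ConnectedComponent,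
      ∃! e : Sym2 V,
        e ∈ (SimpleGraph.fromEdgeSet (Set.range sel)).edgeSet ∧
        (∀ x ∈ e, (SimpleGraph.fromEdgeSet (Set.range sel)).connectedComponentMk x = c) ∧
        ∃ u v : V, e = s(u, v) ∧ sel u = e ∧ sel v = e :=
  stmt_2_general G w hw sel hsel
end

section
/- Let α ≥ 1 be a natural number, let G be a finite connected simple graph with more than α vertices, and let H be a spanning subgraph of G such that for every vertex v, the degree of v in H is at least min(deg_G(v), α), where deg_G(v) is the degree of v in G. Then every connected component of H contains at least α + 1 vertices. -/
/-!
If a component `c` of `H` had at most `α` vertices, every `v ∈ c` would have fewer than `α`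
`H`-neighbours, so the degree condition forces `deg_H v = deg_G v`: every `G`-edge at `v` is an
`H`-edge. Then `c` is closed under `G`-adjacency, hence all of `V` since `G` is connected,
contradicting `α < |V|`.
-/

namespace SimpleGraph

variable {V : Type*} {G H : SimpleGraph V}

lemma ConnectedComponent.degree_lt_card_supp [Finite V] (c : H.ConnectedComponent) {v : V}
    [Fintype (H.neighborSet v)] (hv : v ∈ c.supp) : H.degree v < Nat.card c.supp := by
  have hsub : H.neighborSet v ⊂ c.supp :=
    Set.ssubset_iff_of_subset (fun _ hw ↦ c.mem_supp_of_adj_mem_supp hv hw) |>.mpr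
      ⟨v, hv, H.notMem_neighborSet_self⟩
  rw [← card_neighborSet_eq_degree, ← Nat.card_eq_fintype_card, Nat.card_coe_set_eq,
    Nat.card_coe_set_eq]
  exact Set.ncard_lt_ncard hsub

lemma adj_of_le_of_degree_le (hHG : H ≤ G) {v w : V} [Fintype (G.neighborSet v)]
    [Fintype (H.neighborSet v)] (hdeg : G.degree v ≤ H.degree v) (hadj : G.Adj v w) :
    H.Adj v w := by
  have : H.neighborSet v = G.neighborSet v := by
    refine Set.eq_of_subset_of_card_le (fun _ h ↦ hHG h) ?_
    simpa only [card_neighborSet_eq_degree] using hdeg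
  rw [← mem_neighborSet, this]
  exact hadj

lemma Preconnected.eq_univ_of_adj_closed (hG : G.Preconnected) {s : Set V} (hs : s.Nonempty)
    (hclosed : ∀ v ∈ s, ∀ w, G.Adj v w → w ∈ s) : s = Set.univ := by
  obtain ⟨u, hu⟩ := hs
  refine Set.eq_univ_of_forall fun w ↦ ?_
  obtain ⟨p⟩ := hG u w
  induction p with
  | nil => exact hu
  | cons hadj _ ih => exact ih (hclosed _ hu _ hadj)

end SimpleGraph

theorem stmt_4_general {V : Type*} [Fintype V] (α : ℕ)
    (G : SimpleGraph V) [DecidableRel G.Adj] (hG : G.Connected)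
    (hcard : α < Fintype.card V)
    (H : SimpleGraph V) [DecidableRel H.Adj] (hHG : H ≤ G)
    (hdeg : ∀ v : V, min (G.degree v) α ≤ H.degree v) :
    ∀ c : H.ConnectedComponent, α + 1 ≤ Nat.card c.supp := by
  intro c
  by_contra! hsmall
  have hclosed : ∀ v ∈ c.supp, ∀ w, G.Adj v w → w ∈ c.supp := fun v hv w hadj ↦ by
    have hHv : H.degree v < α := (c.degree_lt_card_supp hv).trans_le (by omega)
    have hGv : G.degree v ≤ H.degree v := by have := hdeg v; omega
    exact c.mem_supp_of_adj_mem_supp hv (SimpleGraph.adj_of_le_of_degree_le hHG hGv hadj)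
  have huniv := hG.preconnected.eq_univ_of_adj_closed c.nonempty_supp hclosed
  rw [huniv, Nat.card_coe_set_eq, Set.ncard_univ, Nat.card_eq_fintype_card] at hsmall
  omega

/-- Let `α ≥ 1`, let `G` be a finite connected simple graph with more than `α` vertices,
and let `H` be a spanning subgraph of `G` such that every vertex `v` has degree at least
`min (deg_G v) α` in `H`.  Then every connected component of `H` contains at least
`α + 1` vertices. -/
theorem stmt_4 {V : Type*} [Fintype V] [DecidableEq V] (α : ℕ) (hα : 1 ≤ α)
    (G : SimpleGraph V) [DecidableRel G.Adj] (hG : G.Connected)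
    (hcard : α < Fintype.card V)
    (H : SimpleGraph V) [DecidableRel H.Adj] (hHG : H ≤ G)
    (hdeg : ∀ v : V, min (G.degree v) α ≤ H.degree v) :
    ∀ c : H.ConnectedComponent, α + 1 ≤ Nat.card c.supp :=
  stmt_4_general α G hG hcard H hHG hdeg
end

section
/- Let G be a finite tree (a connected acyclic simple graph) with a distinguished root vertex r, and let W be a closed walk in G from r to r whose list of darts contains every dart of G exactly once. Let v be a vertex with v ≠ r, let p(v) be the parent of v, let a be the index in the dart list of W of the advance dart (p(v), v), and let b be the index of the retreat dart (v, p(v)). Then a < b and b − a = 2·size(v) − 1, where size(v) is the number of vertices u of G such that v lies on the unique path from r to u. -/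
/-!
The subtree `S` of `v` induces a tree, so it carries `2 (|S| - 1)` darts, and the only dart of `G`
entering `S` is the advance dart `(p v, v)`; hence the only one leaving it is the retreat dart.
The tour starts at `r ∉ S`, so it is inside `S` exactly between its advance and its retreat
dart, and as it uses every dart once, the darts strictly between them are the darts inside `S`.
-/

theorem List.Nodup.natCard_subtype_eq_of_getElem_iff {α : Type*} [DecidableEq α] {l : List α}
    (hl : l.Nodup) (hall : ∀ x, x ∈ l) {P : α → Prop} {a b : ℕ} (hb : b ≤ l.length)
    (hP : ∀ i (hi : i < l.length), P l[i] ↔ a < i ∧ i < b) :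
    Nat.card {x // P x} = b - a - 1 := by
  let e : {x // P x} ≃ Finset.Ioo a b :=
    { toFun x := ⟨l.idxOf x.1, by
        have hx := List.idxOf_lt_length_iff.2 (hall x.1)
        exact Finset.mem_Ioo.2 ((hP _ hx).1 (by rw [List.getElem_idxOf]; exact x.2))⟩
      invFun i := ⟨l[i.1]'(by grind), (hP _ _).2 (Finset.mem_Ioo.1 i.2)⟩
      left_inv x := by ext; simp [List.getElem_idxOf]
      right_inv i := by ext; simp [hl.idxOf_getElem] }
  rw [Nat.card_congr e, Nat.card_eq_fintype_card, Fintype.card_coe, Nat.card_Ioo]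

namespace SimpleGraph.Walk

variable {V : Type*} [DecidableEq V] {G : SimpleGraph V} {r w : V} {W : G.Walk r w}
  {S : Set V} {d : G.Dart}

theorem eq_idxOf_of_getVert_notMem_of_getVert_succ_mem (hW : W.darts.Nodup)
    (hcut : ∀ d' : G.Dart, d'.fst ∉ S → d'.snd ∈ S → d' = d) {j : ℕ} (hj : j < W.darts.length)
    (hout : W.getVert j ∉ S) (hin : W.getVert (j + 1) ∈ S) : j = W.darts.idxOf d := by
  rw [← hcut W.darts[j] (by rwa [darts_getElem_eq_getVert j hj])
    (by rwa [darts_getElem_eq_getVert j hj]), hW.idxOf_getElem]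

theorem getVert_idxOf (hdW : d ∈ W.darts) :
    W.getVert (W.darts.idxOf d) = d.fst ∧ W.getVert (W.darts.idxOf d + 1) = d.snd := by
  have h := darts_getElem_eq_getVert _ (List.idxOf_lt_length_iff.2 hdW)
  rw [List.getElem_idxOf] at h
  exact ⟨(congrArg (·.fst) h).symm, (congrArg (·.snd) h).symm⟩

theorem getVert_mem_iff_of_forall_ne_idxOf (hW : W.darts.Nodup)
    (hcut : ∀ d' : G.Dart, d'.fst ∉ S → d'.snd ∈ S → d' = d) {i k : ℕ} (hik : i ≤ k)
    (hk : k ≤ W.length)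
    (h : ∀ j, i ≤ j → j < k → j ≠ W.darts.idxOf d ∧ j ≠ W.darts.idxOf d.symm) :
    W.getVert k ∈ S ↔ W.getVert i ∈ S := by
  have hcut' : ∀ d' : G.Dart, d'.fst ∉ Sᶜ → d'.snd ∈ Sᶜ → d' = d.symm := fun d' h1 h2 => by
    rw [← hcut d'.symm h2 (not_not.1 h1), Dart.symm_symm]
  induction k, hik using Nat.le_induction with
  | base => rfl
  | succ k hik ih =>
    have hk' : k < W.darts.length := by rw [length_darts]; omega
    have hki : W.getVert k ∈ S ↔ W.getVert i ∈ S := ih (by omega) fun j hj _ => h j hj (by omega)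
    rw [← hki]
    obtain ⟨ha, hb⟩ := h k hik (by omega)
    constructor
    · intro hin
      by_contra hout
      exact ha (eq_idxOf_of_getVert_notMem_of_getVert_succ_mem hW hcut hk' hout hin)
    · intro hin
      by_contra hout
      exact hb (eq_idxOf_of_getVert_notMem_of_getVert_succ_mem (S := Sᶜ) hW hcut' hk'
        (not_not.2 hin) hout)

theorem getVert_mem_iff_of_forall_dart_eq (hW : W.darts.Nodup) (hr : r ∉ S)
    (hd : d.fst ∉ S) (hd' : d.snd ∈ S) (hdW : d ∈ W.darts) (hdW' : d.symm ∈ W.darts)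
    (hcut : ∀ d' : G.Dart, d'.fst ∉ S → d'.snd ∈ S → d' = d) :
    W.darts.idxOf d < W.darts.idxOf d.symm ∧ ∀ i ≤ W.length,
      (W.getVert i ∈ S ↔ W.darts.idxOf d < i ∧ i ≤ W.darts.idxOf d.symm) := by
  have stable {i k : ℕ} := getVert_mem_iff_of_forall_ne_idxOf (i := i) (k := k) hW hcut
  set a := W.darts.idxOf d
  set b := W.darts.idxOf d.symm
  have hb : b < W.length := W.length_darts ▸ List.idxOf_lt_length_iff.2 hdW'
  obtain ⟨-, hva⟩ := getVert_idxOf hdW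
  obtain ⟨hvb, hvb'⟩ := getVert_idxOf hdW'
  have hab : a < b := by
    by_contra! hba
    have h0b := stable (Nat.zero_le b) hb.le fun j _ hj => by omega
    rw [getVert_zero, hvb] at h0b
    exact hr (h0b.1 hd')
  refine ⟨hab, fun i hi => ?_⟩
  rcases Nat.lt_or_ge a i with hai | hia
  · rcases Nat.lt_or_ge b i with hbi | hib
    · rw [stable hbi hi fun j _ _ => by omega, hvb']
      exact iff_of_false hd (by omega)
    · rw [stable hai hi fun j _ _ => by omega, hva]
      exact iff_of_true hd' ⟨hai, hib⟩
  · rw [stable (Nat.zero_le i) hi fun j _ _ => by omega, getVert_zero]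
    exact iff_of_false hr (by omega)

theorem idxOf_lt_idxOf_symm_and_sub_eq_natCard (hW : W.darts.Nodup)
    (hall : ∀ d', d' ∈ W.darts) (hr : r ∉ S) (hd : d.fst ∉ S) (hd' : d.snd ∈ S)
    (hcut : ∀ d' : G.Dart, d'.fst ∉ S → d'.snd ∈ S → d' = d) :
    W.darts.idxOf d < W.darts.idxOf d.symm ∧ W.darts.idxOf d.symm - W.darts.idxOf d =
      Nat.card {d' : G.Dart // d'.fst ∈ S ∧ d'.snd ∈ S} + 1 := by
  obtain ⟨hab, hmem⟩ := getVert_mem_iff_of_forall_dart_eq hW hr hd hd' (hall d) (hall _) hcut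
  have hb := List.idxOf_lt_length_iff.2 (hall d.symm)
  have hcount := hW.natCard_subtype_eq_of_getElem_iff hall hb.le
    (P := fun d' : G.Dart => d'.fst ∈ S ∧ d'.snd ∈ S) (a := W.darts.idxOf d) fun i hi => by
      rw [darts_getElem_eq_getVert i hi]
      rw [length_darts] at hi
      rw [hmem i hi.le, hmem (i + 1) hi]
      omega
  exact ⟨hab, by omega⟩

end SimpleGraph.Walk

namespace SimpleGraph

variable {V : Type*} {G : SimpleGraph V} {r v u x y : V}

def subtree (G : SimpleGraph V) (r v : V) : Set V := {u | ∀ q : G.Path r u, v ∈ q.1.support}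

theorem mem_subtree_self : v ∈ G.subtree r v := fun q => q.1.end_mem_support

theorem root_notMem_subtree (hv : v ≠ r) : r ∉ G.subtree r v := fun h =>
  hv (by simpa using h Path.nil)

theorem IsAcyclic.mem_subtree_iff (hG : G.IsAcyclic) (q : G.Path r u) :
    u ∈ G.subtree r v ↔ v ∈ q.1.support :=
  ⟨fun h => h q, fun h q' => (hG.subsingleton_path r u).elim q q' ▸ h⟩

theorem IsAcyclic.mem_subtree_of_mem_support_dropUntil [DecidableEq V] (hG : G.IsAcyclic)
    {q : G.Walk r u} (hq : q.IsPath) (hv : v ∈ q.support) (hx : x ∈ (q.dropUntil v hv).support) :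
    x ∈ G.subtree r v := by
  have hpath : ((q.takeUntil v hv).append ((q.dropUntil v hv).takeUntil x hx)).IsPath := by
    rw [← q.take_spec hv, ← (q.dropUntil v hv).take_spec hx, Walk.append_assoc] at hq
    exact hq.of_append_left
  rw [hG.mem_subtree_iff ⟨_, hpath⟩, Walk.mem_support_append_iff]
  exact Or.inl (Walk.end_mem_support _)

theorem IsTree.isTree_induce_subtree (hG : G.IsTree) : (G.induce (G.subtree r v)).IsTree := by
  classical
  refine ⟨induce_connected_of_patches v mem_subtree_self fun {u} hu => ?_, hG.isAcyclic.induce _⟩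
  obtain ⟨q, hq⟩ := (hG.connected r u).exists_isPath
  have hv : v ∈ q.support := (hG.isAcyclic.mem_subtree_iff ⟨q, hq⟩).1 hu
  exact ⟨_, fun x hx => hG.isAcyclic.mem_subtree_of_mem_support_dropUntil hq hv hx,
    (q.dropUntil v hv).start_mem_support, (q.dropUntil v hv).end_mem_support,
    (q.dropUntil v hv).connected_induce_support _ _⟩

theorem IsAcyclic.eq_of_adj_of_notMem_subtree (hG : G.IsAcyclic) (q : G.Path r y)
    (h : G.Adj y x) (hy : y ∉ G.subtree r v) (hx : x ∈ G.subtree r v) : x = v ∧ (q.1.concat h).IsPath := by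
  classical
  have hxq : x ∉ q.1.support := fun hxq => by
    rw [hG.mem_subtree_iff q] at hy
    exact hy (q.1.support_takeUntil_subset_support hxq
      ((hG.mem_subtree_iff ⟨_, q.2.takeUntil hxq⟩).1 hx))
  have hpath := q.2.concat hxq h
  refine ⟨?_, hpath⟩
  rw [hG.mem_subtree_iff ⟨_, hpath⟩, Walk.support_concat, List.mem_append,
    List.mem_singleton] at hx
  exact (hx.resolve_left ((hG.mem_subtree_iff q).not.1 hy)).symm

theorem IsTree.notMem_subtree_of_forall_mem_support (hG : G.IsTree) (hadj : G.Adj x v)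
    (hp : ∀ q : G.Path v r, x ∈ q.1.support) : x ∉ G.subtree r v := by
  classical
  obtain ⟨q, hq⟩ := (hG.connected r v).exists_isPath
  have hx : x ∈ q.support := by simpa using hp ⟨q.reverse, hq.reverse⟩
  rw [hG.isAcyclic.mem_subtree_iff ⟨_, hq.takeUntil hx⟩]
  exact Walk.endpoint_notMem_support_takeUntil hq hx hadj.ne.symm

theorem IsTree.eq_of_fst_notMem_subtree_of_snd_mem_subtree (hG : G.IsTree) (hadj : G.Adj x v)
    (hx : x ∉ G.subtree r v) (d : G.Dart) (hd : d.fst ∉ G.subtree r v)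
    (hd' : d.snd ∈ G.subtree r v) : d = ⟨(x, v), hadj⟩ := by
  obtain ⟨⟨y, z⟩, h⟩ := d
  obtain ⟨qy, hqy⟩ := (hG.connected r y).exists_isPath
  obtain ⟨qx, hqx⟩ := (hG.connected r x).exists_isPath
  obtain ⟨rfl, hpy⟩ := hG.isAcyclic.eq_of_adj_of_notMem_subtree ⟨qy, hqy⟩ h hd hd'
  obtain ⟨-, hpx⟩ := hG.isAcyclic.eq_of_adj_of_notMem_subtree ⟨qx, hqx⟩ hadj hx mem_subtree_self
  obtain ⟨rfl, -⟩ := Walk.concat_inj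
    (congrArg Subtype.val ((hG.isAcyclic.subsingleton_path r z).elim ⟨_, hpy⟩ ⟨_, hpx⟩))
  rfl

def induceDartEquiv (S : Set V) :
    (G.induce S).Dart ≃ {d : G.Dart // d.fst ∈ S ∧ d.snd ∈ S} where
  toFun d := ⟨⟨(d.fst, d.snd), d.adj⟩, d.fst.2, d.snd.2⟩
  invFun d := ⟨(⟨_, d.2.1⟩, ⟨_, d.2.2⟩), d.1.adj⟩
  left_inv _ := rfl
  right_inv _ := rfl

theorem IsTree.natCard_dart_induce [Finite V] {S : Set V} (hS : (G.induce S).IsTree) :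
    Nat.card {d : G.Dart // d.fst ∈ S ∧ d.snd ∈ S} = 2 * (Nat.card S - 1) := by
  classical
  have := Fintype.ofFinite V
  rw [← Nat.card_congr (induceDartEquiv S), Nat.card_eq_fintype_card,
    dart_card_eq_twice_card_edges, Nat.card_eq_fintype_card, ← hS.card_edgeFinset, Nat.add_sub_cancel]

end SimpleGraph

open SimpleGraph

/-- Let `G` be a finite tree rooted at `r` and let `W` be a closed walk from `r` to `r`
whose list of darts contains every dart of `G` exactly once (an Euler tour).  For a
vertex `v ≠ r` with parent `p v` (the neighbor of `v` lying on every path from `v` to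
`r`), if `a` is the index in `W.darts` of the advance dart `(p v, v)` and `b` is the
index of the retreat dart `(v, p v)`, then `a < b` and `b - a = 2 * size v - 1`, where
`size v` is the number of vertices `u` such that `v` lies on the unique path from `r`
to `u`. -/
theorem stmt_5 {V : Type*} [Fintype V] [DecidableEq V] (G : SimpleGraph V)
    (hG : G.IsTree) (r : V) (W : G.Walk r r)
    (hW : W.darts.Nodup) (hW' : ∀ d : G.Dart, d ∈ W.darts)
    (p : V → V) (v : V) (hv : v ≠ r)
    (hadj : G.Adj (p v) v)
    (hp : ∀ q : G.Path v r, p v ∈ q.val.support)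
    (a b : ℕ)
    (ha : a = W.darts.idxOf (⟨(p v, v), hadj⟩ : G.Dart))
    (hb : b = W.darts.idxOf (⟨(v, p v), hadj.symm⟩ : G.Dart)) :
    a < b ∧
      b - a = 2 * Nat.card {u : V | ∀ q : G.Path r u, v ∈ q.val.support} - 1 := by
  change a < b ∧ b - a = 2 * Nat.card (G.subtree r v) - 1
  have hpS := hG.notMem_subtree_of_forall_mem_support hadj hp
  obtain ⟨hab, hsub⟩ := W.idxOf_lt_idxOf_symm_and_sub_eq_natCard hW hW' (root_notMem_subtree hv)
    hpS mem_subtree_self (hG.eq_of_fst_notMem_subtree_of_snd_mem_subtree hadj hpS)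
  rw [hG.isTree_induce_subtree.natCard_dart_induce] at hsub
  have hpos : 0 < Nat.card (G.subtree r v) :=
    Nat.card_pos_iff.2 ⟨⟨v, mem_subtree_self⟩, inferInstance⟩
  have hsymm : (⟨(p v, v), hadj⟩ : G.Dart).symm = ⟨(v, p v), hadj.symm⟩ := rfl
  rw [hsymm, ← ha, ← hb] at hab hsub
  exact ⟨hab, by omega⟩
end

section
/- Let G be a finite tree (a connected acyclic simple graph) with a distinguished root vertex r, and let W be a closed walk in G from r to r whose list of darts contains every dart of G exactly once. Then for any two vertices u, v both distinct from r, the vertex v lies on the unique path from r to u if and only if the index of the advance dart (p(v), v) in the dart list of W is at most the index of the advance dart (p(u), u) and the index of the retreat dart (u, p(u)) is at most the index of the retreat dart (v, p(v)). -/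
/-!
Fix a vertex `x ≠ r` with parent `y`, and follow the Euler tour `W` step by step, recording
whether `x` lies on the tree path from `r` to the current vertex. Crossing an edge can only
change this when the edge is `xy`: it switches on exactly at the advance dart `(y, x)` and off
exactly at the retreat dart `(x, y)`, each traversed once. Hence `x` is an ancestor of the
`i`-th vertex of `W` exactly for `idx (y, x) < i ≤ idx (x, y)`. Evaluating this at the vertex
reached by the advance dart of `u` and at the vertex left by the retreat dart of `u` gives
both directions of the theorem.
-/

theorem iff_lt_and_le_of_switches {f : ℕ → Prop} {a b n : ℕ} (hbn : b < n) (h₀ : ¬f 0)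
    (ha : f (a + 1)) (hb : f b) (hb' : ¬f (b + 1))
    (hon : ∀ j < n, ¬f j → f (j + 1) → j = a) (hoff : ∀ j < n, f j → ¬f (j + 1) → j = b) :
    ∀ i ≤ n, f i ↔ a < i ∧ i ≤ b := by
  have hab : a < b := by
    by_contra! hba
    -- `f` can only switch on at step `a`, so it is still off at `b ≤ a`
    have hnot_upto_b : ∀ i ≤ b, ¬f i := by
      intro i hi
      induction i with
      | zero => exact h₀
      | succ i ih =>
        intro hfi
        have := hon i (by omega) (ih (by omega)) hfi
        omega
    exact hnot_upto_b b le_rfl hb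
  intro i hi
  induction i with
  | zero => simp [h₀]
  | succ i ih =>
    by_cases hia : i = a
    · subst hia; simp [ha, hab]
    by_cases hib : i = b
    · subst hib; simp [hb']
    have hstep : f (i + 1) ↔ f i :=
      ⟨fun h => by_contra fun h' => hia (hon i (by omega) h' h),
        fun h => by_contra fun h' => hib (hoff i (by omega) h h')⟩
    rw [hstep, ih (by omega)]
    omega

namespace SimpleGraph

variable {V : Type*} {G : SimpleGraph V}

theorem Walk.getVert_idxOf_dart [DecidableEq V] {u v : V} (W : G.Walk u v) {d : G.Dart}
    (hd : d ∈ W.darts) :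
    W.getVert (W.darts.idxOf d) = d.fst ∧ W.getVert (W.darts.idxOf d + 1) = d.snd := by
  have hlt := List.idxOf_lt_length_iff.mpr hd
  have h := (W.darts_getElem_eq_getVert _ hlt).symm.trans (List.getElem_idxOf hlt)
  exact ⟨congrArg (·.fst) h, congrArg (·.snd) h⟩

theorem Walk.eq_idxOf_of_getVert [DecidableEq V] {u v : V} (W : G.Walk u v)
    (hW : W.darts.Nodup) {j : ℕ} (hj : j < W.length) (d : G.Dart)
    (hfst : d.fst = W.getVert j) (hsnd : d.snd = W.getVert (j + 1)) : j = W.darts.idxOf d := by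
  have hd : W.darts[j]'(by simpa using hj) = d := by
    rw [W.darts_getElem_eq_getVert]
    exact Dart.ext _ _ (Prod.ext hfst.symm hsnd.symm)
  rw [← hd, hW.idxOf_getElem]

namespace IsTree

variable (hG : G.IsTree)

noncomputable def path (u v : V) : G.Path u v :=
  ⟨_, (hG.existsUnique_path u v).exists.choose_spec⟩

theorem path_eq {u v : V} (q : G.Path u v) : q = hG.path u v :=
  (hG.isAcyclic.subsingleton_path u v).elim _ _

theorem path_val_eq {u v : V} {q : G.Walk u v} (hq : q.IsPath) : (hG.path u v).val = q :=
  congrArg Subtype.val (hG.path_eq ⟨q, hq⟩).symm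

theorem path_self (u : V) : (hG.path u u).val = Walk.nil :=
  hG.path_val_eq Walk.IsPath.nil

theorem path_concat {r w w' : V} (h : G.Adj w w') (hw' : w' ∉ (hG.path r w).val.support) :
    (hG.path r w').val = (hG.path r w).val.concat h :=
  hG.path_val_eq ((hG.path r w).prop.concat hw' h)

variable [DecidableEq V]

theorem path_eq_takeUntil {r w x : V} (hx : x ∈ (hG.path r w).val.support) :
    (hG.path r x).val = (hG.path r w).val.takeUntil x hx :=
  hG.path_val_eq ((hG.path r w).prop.takeUntil hx)

theorem support_path_subset {r w x : V} (hx : x ∈ (hG.path r w).val.support) :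
    (hG.path r x).val.support ⊆ (hG.path r w).val.support := by
  rw [hG.path_eq_takeUntil hx]
  exact Walk.support_takeUntil_subset_support _ hx

theorem not_mem_support_path_of_mem {r w x : V} (hwx : w ≠ x)
    (hx : x ∈ (hG.path r w).val.support) : w ∉ (hG.path r x).val.support := by
  rw [hG.path_eq_takeUntil hx]
  exact Walk.endpoint_notMem_support_takeUntil (hG.path r w).prop hx hwx

theorem path_eq_concat_of_adj {r x y : V} (h : G.Adj y x) (hy : y ∈ (hG.path r x).val.support) :
    (hG.path r x).val = (hG.path r y).val.concat h :=
  hG.path_concat h (hG.not_mem_support_path_of_mem h.ne.symm hy)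

theorem eq_of_adj_of_mem_support_path {r x y y' : V} (h : G.Adj y x) (h' : G.Adj y' x)
    (hy : y ∈ (hG.path r x).val.support) (hy' : y' ∈ (hG.path r x).val.support) : y = y' :=
  (Walk.concat_inj ((hG.path_eq_concat_of_adj h hy).symm.trans
    (hG.path_eq_concat_of_adj h' hy'))).1

theorem eq_and_eq_of_adj_of_mem_of_not_mem {r w w' x y : V} (hww' : G.Adj w w')
    (hxw : x ∈ (hG.path r w).val.support) (hxw' : x ∉ (hG.path r w').val.support)
    (hyx : G.Adj y x) (hy : y ∈ (hG.path r x).val.support) : w = x ∧ w' = y := by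
  have hw : w ∉ (hG.path r w').val.support := fun hw => hxw' (hG.support_path_subset hw hxw)
  have hconcat := hG.path_concat hww'.symm hw
  have hwx : w = x := by
    rw [hconcat, Walk.support_concat, List.mem_append, List.mem_singleton] at hxw
    exact (hxw.resolve_left hxw').symm
  subst hwx
  refine ⟨rfl, hG.eq_of_adj_of_mem_support_path hww'.symm hyx ?_ hy⟩
  rw [hconcat, Walk.support_concat]
  exact List.mem_append_left _ (Walk.end_mem_support _)

theorem mem_support_path_getVert_iff {r t x y : V} (hxr : x ≠ r) (hyx : G.Adj y x)
    (hy : y ∈ (hG.path r x).val.support) (W : G.Walk r t) (hW : W.darts.Nodup)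
    (hadv : ⟨(y, x), hyx⟩ ∈ W.darts) (hret : ⟨(x, y), hyx.symm⟩ ∈ W.darts)
    {i : ℕ} (hi : i ≤ W.length) :
    x ∈ (hG.path r (W.getVert i)).val.support ↔
      W.darts.idxOf ⟨(y, x), hyx⟩ < i ∧ i ≤ W.darts.idxOf ⟨(x, y), hyx.symm⟩ := by
  obtain ⟨-, hadv_snd⟩ := W.getVert_idxOf_dart hadv
  obtain ⟨hret_fst, hret_snd⟩ := W.getVert_idxOf_dart hret
  refine iff_lt_and_le_of_switches (f := fun i => x ∈ (hG.path r (W.getVert i)).val.support)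
    (by simpa using List.idxOf_lt_length_iff.mpr hret) ?_ ?_ ?_ ?_ ?_ ?_ i hi
  · rw [W.getVert_zero, hG.path_self]
    simpa using hxr
  · rw [hadv_snd]
    exact Walk.end_mem_support _
  · rw [hret_fst]
    exact Walk.end_mem_support _
  · rw [hret_snd]
    exact hG.not_mem_support_path_of_mem hyx.ne.symm hy
  · intro j hj hout hin
    obtain ⟨hsucc, hcur⟩ :=
      hG.eq_and_eq_of_adj_of_mem_of_not_mem (W.adj_getVert_succ hj).symm hin hout hyx hy
    exact W.eq_idxOf_of_getVert hW hj ⟨(y, x), hyx⟩ hcur.symm hsucc.symm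
  · intro j hj hin hout
    obtain ⟨hcur, hsucc⟩ :=
      hG.eq_and_eq_of_adj_of_mem_of_not_mem (W.adj_getVert_succ hj) hin hout hyx hy
    exact W.eq_idxOf_of_getVert hW hj ⟨(x, y), hyx.symm⟩ hcur.symm hsucc.symm

end IsTree

end SimpleGraph

open SimpleGraph in
theorem stmt_6_general {V : Type*} [DecidableEq V] (G : SimpleGraph V)
    (hG : G.IsTree) (r : V) (W : G.Walk r r)
    (hW : W.darts.Nodup) (hW' : ∀ d : G.Dart, d ∈ W.darts)
    (p : V → V)
    (hp : ∀ x : V, x ≠ r → G.Adj (p x) x)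
    (hp' : ∀ (x : V) (_ : x ≠ r) (q : G.Path x r), p x ∈ q.val.support)
    (u v : V) (hu : u ≠ r) (hv : v ≠ r) :
    (∀ q : G.Path r u, v ∈ q.val.support) ↔
      (W.darts.idxOf (⟨(p v, v), hp v hv⟩ : G.Dart) ≤
          W.darts.idxOf (⟨(p u, u), hp u hu⟩ : G.Dart) ∧
        W.darts.idxOf (⟨(u, p u), (hp u hu).symm⟩ : G.Dart) ≤
          W.darts.idxOf (⟨(v, p v), (hp v hv).symm⟩ : G.Dart)) := by
  have hparent (x : V) (hx : x ≠ r) : p x ∈ (hG.path r x).val.support := by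
    simpa [Path.reverse] using hp' x hx (hG.path r x).reverse
  have hancestor (x : V) (hx : x ≠ r) {i : ℕ} (hi : i ≤ W.length) :=
    hG.mem_support_path_getVert_iff hx (hp x hx) (hparent x hx) W hW (hW' _) (hW' _) hi
  have hlt (d : G.Dart) : W.darts.idxOf d < W.length := by
    simpa using List.idxOf_lt_length_iff.mpr (hW' d)
  obtain ⟨-, hadv_u⟩ := W.getVert_idxOf_dart (hW' ⟨(p u, u), hp u hu⟩)
  obtain ⟨hret_u, -⟩ := W.getVert_idxOf_dart (hW' ⟨(u, p u), (hp u hu).symm⟩)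
  have hv_adv := hancestor v hv (i := _ + 1) (hlt ⟨(p u, u), hp u hu⟩)
  have hv_ret := hancestor v hv (hlt ⟨(u, p u), (hp u hu).symm⟩).le
  have hu_ret := hancestor u hu (hlt ⟨(u, p u), (hp u hu).symm⟩).le
  rw [hadv_u] at hv_adv
  rw [hret_u] at hv_ret hu_ret
  have hadv_lt_ret := (hu_ret.mp (Walk.end_mem_support _)).1
  have hall_paths : (∀ q : G.Path r u, v ∈ q.val.support) ↔ v ∈ (hG.path r u).val.support :=
    ⟨fun h => h _, fun h q => hG.path_eq q ▸ h⟩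
  rw [hall_paths]
  constructor
  · intro h
    exact ⟨Nat.lt_succ_iff.mp (hv_adv.mp h).1, (hv_ret.mp h).2⟩
  · rintro ⟨hadv_le, hret_le⟩
    exact hv_adv.mpr ⟨Nat.lt_succ_of_le hadv_le, by omega⟩

/-- Let `G` be a finite tree rooted at `r` and let `W` be a closed walk from `r` to `r`
whose list of darts contains every dart of `G` exactly once (an Euler tour), and let
`p x` be the parent of each vertex `x ≠ r` (the neighbor of `x` lying on every path
from `x` to `r`).  Then for vertices `u, v ≠ r`, `v` lies on the unique path from `r`
to `u` if and only if the index of the advance dart `(p v, v)` in `W.darts` is at most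
the index of the advance dart `(p u, u)`, and the index of the retreat dart `(u, p u)`
is at most the index of the retreat dart `(v, p v)`. -/
theorem stmt_6 {V : Type*} [Fintype V] [DecidableEq V] (G : SimpleGraph V)
    (hG : G.IsTree) (r : V) (W : G.Walk r r)
    (hW : W.darts.Nodup) (hW' : ∀ d : G.Dart, d ∈ W.darts)
    (p : V → V)
    (hp : ∀ x : V, x ≠ r → G.Adj (p x) x)
    (hp' : ∀ (x : V) (_ : x ≠ r) (q : G.Path x r), p x ∈ q.val.support)
    (u v : V) (hu : u ≠ r) (hv : v ≠ r) :
    (∀ q : G.Path r u, v ∈ q.val.support) ↔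
      (W.darts.idxOf (⟨(p v, v), hp v hv⟩ : G.Dart) ≤
          W.darts.idxOf (⟨(p u, u), hp u hu⟩ : G.Dart) ∧
        W.darts.idxOf (⟨(u, p u), (hp u hu).symm⟩ : G.Dart) ≤
          W.darts.idxOf (⟨(v, p v), (hp v hv).symm⟩ : G.Dart)) :=
  stmt_6_general G hG r W hW hW' p hp hp' u v hu hv
end

section
/- Let G be a finite biconnected simple graph on n ≥ 3 vertices, and let {s, t} be an edge of G. Then there exists an st-numbering of G, i.e., a bijection ℓ from the vertex set of G onto {1, 2, ..., n} such that ℓ(s) = 1, ℓ(t) = n, and every vertex v other than s and t is adjacent in G to two vertices u and w with ℓ(u) ≤ ℓ(v) ≤ ℓ(w). -/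
/-!
Ear insertion. Grow a list `L`, starting from `[s, t]`, whose order is an st-numbering of the
subgraph it spans. While a vertex is missing, connectivity gives an edge `u x` leaving `L`, and in
the connected graph `G - u` a walk from `x` to `L` first meets `L` at some `w ≠ u`. The part of it
outside `L` is inserted just after `u` if `w` comes later than `u`, and reversed just before `u`
otherwise: each new vertex then has a neighbour on either side, and the old witnesses survive
because the old list is a sublist of the new one.
-/

namespace List

variable {α : Type*} {R : α → α → Prop} {l : List α} {a b v : α}

theorem IsChain.exists_rel_pair_sublist_of_mem_tail :
    ∀ {l : List α}, l.IsChain R → v ∈ l.tail → ∃ y, R y v ∧ [y, v] <+ l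
  | a :: b :: l, h, hv => by
    rcases mem_cons.1 hv with rfl | hv
    · exact ⟨a, h.rel, by simp⟩
    · obtain ⟨y, hy, hs⟩ := h.tail.exists_rel_pair_sublist_of_mem_tail hv
      exact ⟨y, hy, hs.cons a⟩

theorem IsChain.exists_rel_pair_sublist_of_mem_dropLast (h : l.IsChain R) (hv : v ∈ l.dropLast) :
    ∃ y, R v y ∧ [v, y] <+ l := by
  obtain ⟨y, hy, hs⟩ := (isChain_reverse.2 h).exists_rel_pair_sublist_of_mem_tail
    (by rwa [tail_reverse, mem_reverse])
  exact ⟨y, hy, by simpa [sublist_reverse_iff] using hs⟩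

theorem Nodup.idxOf_lt_of_pair_sublist [DecidableEq α] (hl : l.Nodup) (h : [a, b] <+ l) :
    l.idxOf a < l.idxOf b := by
  obtain ⟨r₁, r₂, rfl, ha, hb⟩ := cons_sublist_iff.1 h
  have hb₁ : b ∉ r₁ := fun hb₁ => disjoint_of_nodup_append hl hb₁ (singleton_sublist.1 hb)
  rw [idxOf_append_of_mem ha, idxOf_append_of_notMem hb₁]
  exact (idxOf_lt_length_of_mem ha).trans_le (Nat.le_add_right _ _)

theorem Nodup.range_idxOf_add_one [DecidableEq α] (hl : l.Nodup) (hall : ∀ v, v ∈ l) :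
    Set.range (fun v => l.idxOf v + 1) = Set.Icc 1 l.length := by
  ext m
  constructor
  · rintro ⟨v, rfl⟩
    exact ⟨Nat.le_add_left _ _, idxOf_lt_length_of_mem (hall v)⟩
  · rintro ⟨h1, h2⟩
    refine ⟨l[m - 1], ?_⟩
    simp only [hl.idxOf_getElem]
    omega

end List

open List

namespace SimpleGraph

variable {V : Type*} {G : SimpleGraph V}

theorem Walk.exists_walk_notMem_adj_mem {S : Set V} :
    ∀ {a b : V} (W : G.Walk a b), a ∉ S → b ∈ S →
      ∃ y w, ∃ p : G.Walk a y,
        (∀ z ∈ p.support, z ∉ S) ∧ w ∈ S ∧ w ∈ W.support ∧ G.Adj y w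
  | _, _, .nil, ha, hb => absurd hb ha
  | a, _, .cons (v := c) h W, ha, hb => by
    by_cases hc : c ∈ S
    · exact ⟨a, c, .nil, by simpa using ha, hc, by simp, h⟩
    · obtain ⟨y, w, p, hp, hw, hwW, hyw⟩ := W.exists_walk_notMem_adj_mem hc hb
      refine ⟨y, w, .cons h p, ?_, hw, by simp [hwW], hyw⟩
      simpa [ha] using hp

/-- The position in `L` serves as st-number: `L` is an st-numbering of the subgraph induced on
its entries. -/
structure IsSTList (G : SimpleGraph V) (s t : V) (L : List V) : Prop where
  nodup : L.Nodup
  head?_eq : L.head? = some s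
  getLast?_eq : L.getLast? = some t
  exists_lower : ∀ v ∈ L, v ≠ s → ∃ u, G.Adj v u ∧ [u, v] <+ L
  exists_upper : ∀ v ∈ L, v ≠ t → ∃ w, G.Adj v w ∧ [v, w] <+ L

namespace IsSTList

variable {s t u w : V} {L : List V}

theorem pair (hst : G.Adj s t) : G.IsSTList s t [s, t] where
  nodup := by simp [hst.ne]
  head?_eq := rfl
  getLast?_eq := rfl
  exists_lower v hv hvs := ⟨s, by simp_all [hst.symm]⟩
  exists_upper v hv hvt := ⟨t, by simp_all⟩

theorem reverse (hL : G.IsSTList s t L) : G.IsSTList t s L.reverse where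
  nodup := nodup_reverse.2 hL.nodup
  head?_eq := by rw [head?_reverse, hL.getLast?_eq]
  getLast?_eq := by rw [getLast?_reverse, hL.head?_eq]
  exists_lower v hv hvt := by
    obtain ⟨w, hvw, hs⟩ := hL.exists_upper v (mem_reverse.1 hv) hvt
    exact ⟨w, hvw, by simpa using reverse_sublist.2 hs⟩
  exists_upper v hv hvs := by
    obtain ⟨u, hvu, hs⟩ := hL.exists_lower v (mem_reverse.1 hv) hvs
    exact ⟨u, hvu, by simpa using reverse_sublist.2 hs⟩

theorem start_mem (hL : G.IsSTList s t L) : s ∈ L := mem_of_mem_head? hL.head?_eq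

theorem end_mem (hL : G.IsSTList s t L) : t ∈ L := mem_of_getLast? hL.getLast?_eq

theorem insert_after (hL : G.IsSTList s t L) {A B P : List V} (hAB : L = A ++ u :: B)
    (hw : w ∈ B) (hP : (u :: P ++ [w]).IsChain G.Adj) (hPnd : P.Nodup) (hPL : P.Disjoint L) :
    G.IsSTList s t (A ++ u :: (P ++ B)) := by
  subst hAB
  have hperm : (A ++ u :: (P ++ B)).Perm (P ++ (A ++ u :: B)) := by
    simpa using (perm_append_comm (l₁ := A ++ [u]) (l₂ := P)).append_right B
  have hsub : A ++ u :: B <+ A ++ u :: (P ++ B) :=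
    ((sublist_append_right P B).cons_cons u).append_left A
  have hpath : u :: P ++ [w] <+ A ++ u :: (P ++ B) :=
    (((singleton_sublist.2 hw).append_left P).cons_cons u).trans (sublist_append_right A _)
  have hmem : ∀ v ∈ A ++ u :: (P ++ B), v ∈ A ++ u :: B ∨ v ∈ P := fun v hv => by
    simpa [or_comm] using hperm.subset hv
  refine ⟨hperm.nodup_iff.2 (hPnd.append hL.nodup hPL), ?_, ?_, ?_, ?_⟩
  · cases A <;> simpa using hL.head?_eq
  · have hB : B ≠ [] := ne_nil_of_mem hw
    have h := hL.getLast?_eq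
    rw [show A ++ u :: B = (A ++ [u]) ++ B by simp, getLast?_append_of_ne_nil _ hB] at h
    rwa [show A ++ u :: (P ++ B) = (A ++ u :: P) ++ B by simp, getLast?_append_of_ne_nil _ hB]
  · intro v hv hvs
    rcases hmem v hv with hv | hv
    · obtain ⟨x, hvx, hs⟩ := hL.exists_lower v hv hvs
      exact ⟨x, hvx, hs.trans hsub⟩
    · obtain ⟨x, hxv, hs⟩ := hP.exists_rel_pair_sublist_of_mem_tail (v := v) (by simp [hv])
      exact ⟨x, hxv.symm, hs.trans hpath⟩
  · intro v hv hvt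
    rcases hmem v hv with hv | hv
    · obtain ⟨x, hvx, hs⟩ := hL.exists_upper v hv hvt
      exact ⟨x, hvx, hs.trans hsub⟩
    · obtain ⟨x, hvx, hs⟩ := hP.exists_rel_pair_sublist_of_mem_dropLast (v := v)
        (by rw [dropLast_concat]; exact mem_cons_of_mem u hv)
      exact ⟨x, hvx, hs.trans hpath⟩

theorem exists_insert_path (hL : G.IsSTList s t L) (hu : u ∈ L) (hw : w ∈ L) (hwu : w ≠ u)
    {P : List V} (hP : (u :: P ++ [w]).IsChain G.Adj) (hPnd : P.Nodup) (hPL : P.Disjoint L) :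
    ∃ L', G.IsSTList s t L' ∧ L'.length = P.length + L.length := by
  obtain ⟨A, B, rfl⟩ := append_of_mem hu
  rcases mem_append.1 hw with hwA | hwB
  · -- Reversing everything turns this into an insertion after `u`.
    refine ⟨A ++ (P.reverse ++ u :: B), ?_, by simp; omega⟩
    simpa using (hL.reverse.insert_after (A := B.reverse) (by simp) (mem_reverse.2 hwA) hP
      hPnd fun v hvP hvL => hPL hvP (by simp at hvL ⊢; tauto)).reverse
  · refine ⟨A ++ u :: (P ++ B), hL.insert_after rfl ?_ hP hPnd hPL, by simp; omega⟩
    simpa [hwu] using hwB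

theorem exists_length_lt [DecidableEq V] (hconn : G.Connected)
    (hbi : ∀ v : V, (G.induce ({v}ᶜ : Set V)).Connected) (hst : s ≠ t) (hL : G.IsSTList s t L)
    {v₀ : V} (hv₀ : v₀ ∉ L) :
    ∃ L', G.IsSTList s t L' ∧ L.length < L'.length := by
  obtain ⟨d, -, hu, hx⟩ :=
    (hconn s v₀).some.exists_boundary_dart {v | v ∈ L} hL.start_mem hv₀
  obtain ⟨c, hc, hcu⟩ : ∃ c ∈ L, c ≠ d.fst := by
    by_cases h : d.fst = s
    · exact ⟨t, hL.end_mem, h ▸ hst.symm⟩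
    · exact ⟨s, hL.start_mem, Ne.symm h⟩
  obtain ⟨W⟩ := (hbi d.fst).preconnected ⟨d.snd, fun h => hx (h ▸ hu)⟩ ⟨c, hcu⟩
  obtain ⟨y, w, p, hp, hw, hwW, hyw⟩ :=
    (W.map (Embedding.induce _).toHom).exists_walk_notMem_adj_mem hx hc
  have hwu : w ≠ d.fst := by
    obtain ⟨w', -, rfl⟩ := mem_map.1 ((Walk.support_map _ _) ▸ hwW)
    exact w'.2
  obtain ⟨L', hL', hlen⟩ := hL.exists_insert_path hu hw hwu (P := p.bypass.support)
    (by simpa using Walk.isChain_adj_cons_support d.adj (p.bypass.concat hyw))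
    p.bypass_isPath.support_nodup
    fun z hz hzL => hp z (p.support_bypass_subset_support hz) hzL
  exact ⟨L', hL', by simp [hlen]⟩

end IsSTList

theorem exists_isSTList_forall_mem [Fintype V] [DecidableEq V] (hconn : G.Connected)
    (hbi : ∀ v : V, (G.induce ({v}ᶜ : Set V)).Connected) {s t : V} (hst : G.Adj s t) :
    ∃ L, G.IsSTList s t L ∧ ∀ v, v ∈ L := by
  let lengths := {n | ∃ L, G.IsSTList s t L ∧ L.length = n}
  have hbdd : BddAbove lengths :=
    ⟨Fintype.card V, by rintro _ ⟨L, hL, rfl⟩; exact hL.nodup.length_le_card⟩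
  obtain ⟨L, hL, hlen⟩ :=
    Nat.sSup_mem (s := lengths) ⟨2, [s, t], IsSTList.pair hst, rfl⟩ hbdd
  refine ⟨L, hL, fun v => by_contra fun hv => ?_⟩
  obtain ⟨L', hL', hlt⟩ := hL.exists_length_lt hconn hbi hst.ne hv
  exact (le_csSup hbdd ⟨L', hL', rfl⟩).not_gt (hlen ▸ hlt)

end SimpleGraph

theorem stmt_8_general {V : Type*} [Fintype V] [DecidableEq V] (G : SimpleGraph V)
    (hconn : G.Connected)
    (hbi : ∀ v : V, (G.induce ({v}ᶜ : Set V)).Connected)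
    (s t : V) (hst : G.Adj s t) :
    ∃ ℓ : V → ℕ, Function.Injective ℓ ∧
      Set.range ℓ = Set.Icc 1 (Fintype.card V) ∧
      ℓ s = 1 ∧ ℓ t = Fintype.card V ∧
      ∀ v : V, v ≠ s → v ≠ t →
        ∃ u w : V, G.Adj v u ∧ G.Adj v w ∧ ℓ u ≤ ℓ v ∧ ℓ v ≤ ℓ w := by
  obtain ⟨L, hL, hall⟩ := SimpleGraph.exists_isSTList_forall_mem hconn hbi hst
  have hcard : Fintype.card V = L.length := by
    simpa using (Fintype.card_congr (hL.nodup.getEquivOfForallMemList L hall)).symm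
  refine ⟨fun v => L.idxOf v + 1, fun a b hab => (idxOf_inj (hall a)).1 (by simpa using hab),
    hcard ▸ hL.nodup.range_idxOf_add_one hall, ?_, ?_, fun v hvs hvt => ?_⟩
  · obtain ⟨l, rfl⟩ := List.head?_eq_some_iff.1 hL.head?_eq
    simp
  · obtain ⟨l, rfl⟩ := List.getLast?_eq_some_iff.1 hL.getLast?_eq
    have htl : t ∉ l := fun h => disjoint_of_nodup_append hL.nodup h (mem_singleton_self t)
    simp [idxOf_append_of_notMem htl, hcard]
  · obtain ⟨u, hvu, hu⟩ := hL.exists_lower v (hall v) hvs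
    obtain ⟨w, hvw, hw⟩ := hL.exists_upper v (hall v) hvt
    exact ⟨u, w, hvu, hvw, Nat.succ_le_succ (hL.nodup.idxOf_lt_of_pair_sublist hu).le,
      Nat.succ_le_succ (hL.nodup.idxOf_lt_of_pair_sublist hw).le⟩

/-- Let `G` be a finite biconnected simple graph on `n ≥ 3` vertices and let `{s, t}`
be an edge of `G`.  Then `G` has an st-numbering: a bijection `ℓ` from the vertices
onto `{1, ..., n}` with `ℓ s = 1`, `ℓ t = n`, and every other vertex `v` adjacent to
vertices `u` and `w` with `ℓ u ≤ ℓ v ≤ ℓ w`. -/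
theorem stmt_8 {V : Type*} [Fintype V] [DecidableEq V] (G : SimpleGraph V)
    (hconn : G.Connected)
    (hbi : ∀ v : V, (G.induce ({v}ᶜ : Set V)).Connected)
    (hcard : 3 ≤ Fintype.card V)
    (s t : V) (hst : G.Adj s t) :
    ∃ ℓ : V → ℕ, Function.Injective ℓ ∧
      Set.range ℓ = Set.Icc 1 (Fintype.card V) ∧
      ℓ s = 1 ∧ ℓ t = Fintype.card V ∧
      ∀ v : V, v ≠ s → v ≠ t →
        ∃ u w : V, G.Adj v u ∧ G.Adj v w ∧ ℓ u ≤ ℓ v ∧ ℓ v ≤ ℓ w :=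
  stmt_8_general G hconn hbi s t hst
end

section
/- Let G be a finite biconnected simple graph on at least 3 vertices, and let {s, t} be an edge of G. Then G admits an open ear decomposition starting with the edge {s, t}: a finite sequence P_0, P_1, ..., P_k of simple paths in G (the ears) whose edge sets partition the edge set of G, such that P_0 consists of the single edge {s, t}, and for each j ≥ 1 the internal vertices of P_j are disjoint from all vertices of P_0, ..., P_{j−1}, each of the two endpoints of P_j is a vertex of some earlier ear P_i with i < j, and the two endpoints of P_j are distinct. -/
/-!
The ears are added one at a time. As long as some edge of `G` is uncovered, connectivity yields
an uncovered edge `uv` at a covered vertex `u`. As `G - u` is connected and `s ≠ t` are covered,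
some path in `G - u` leads from `v` to a covered vertex; cut it at the first covered vertex `w`.
Then `u, v, …, w` is an open ear through the uncovered edge `uv`, so the number of uncovered
edges drops, and the process ends with all edges covered.
-/

namespace SimpleGraph

variable {V : Type*} {G : SimpleGraph V}

theorem Walk.exists_prefix_to_first_mem (S : Set V) {v w₀ : V} (p : G.Walk v w₀)
    (hw₀ : w₀ ∈ S) :
    ∃ w ∈ S, ∃ q : G.Walk v w, q.support ⊆ p.support ∧ ∀ x ∈ q.support, x ≠ w → x ∉ S := by
  induction p with
  | nil => exact ⟨_, hw₀, .nil, by simp, by simp⟩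
  | @cons a b c hab p ih =>
    by_cases ha : a ∈ S
    · exact ⟨a, ha, .nil, by simp, by simp⟩
    · obtain ⟨w, hw, q, hsub, hout⟩ := ih hw₀
      refine ⟨w, hw, .cons hab q, ?_, ?_⟩
      · simpa only [Walk.support_cons] using List.cons_subset_cons a hsub
      · simp only [Walk.support_cons, List.mem_cons, forall_eq_or_imp]
        exact ⟨fun _ => ha, hout⟩

theorem exists_isPath_to_set_of_connected_induce_compl {u v w₀ : V} {S : Set V}
    (hG : (G.induce ({u}ᶜ : Set V)).Connected) (hvu : v ≠ u) (hw₀ : w₀ ∈ S) (hw₀u : w₀ ≠ u) :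
    ∃ w ∈ S, ∃ q : G.Walk v w, q.IsPath ∧ u ∉ q.support ∧ ∀ x ∈ q.support, x ≠ w → x ∉ S := by
  classical
  obtain ⟨p⟩ := hG.preconnected ⟨v, hvu⟩ ⟨w₀, hw₀u⟩
  have hu : u ∉ (p.map (Embedding.induce _).toHom).support := by
    simp only [Walk.support_map, List.mem_map, not_exists, not_and]
    exact fun x _ hx => x.2 hx
  obtain ⟨w, hw, q, hsub, hout⟩ :=
    (p.map (Embedding.induce _).toHom).exists_prefix_to_first_mem S hw₀
  have hbsub := q.support_bypass_subset_support
  exact ⟨w, hw, q.bypass, q.bypass_isPath, fun h => hu (hsub (hbsub h)),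
    fun x hx => hout x (hbsub hx)⟩

theorem Connected.exists_adj_mem_notMem {S : Set V} {C : Set (Sym2 V)} (hG : G.Connected)
    (hC : ∀ e ∈ C, ∀ x ∈ e, x ∈ S) (hS : S.Nonempty) (hE : ¬ G.edgeSet ⊆ C) :
    ∃ u v, G.Adj u v ∧ u ∈ S ∧ s(u, v) ∉ C := by
  obtain ⟨e, he, heC⟩ := Set.not_subset.mp hE
  induction e using Sym2.ind with | _ x y => ?_
  obtain ⟨a, ha⟩ := hS
  by_cases hx : x ∈ S
  · exact ⟨x, y, he, hx, heC⟩
  · obtain ⟨d, -, hd, hd'⟩ := (hG.preconnected a x).some.exists_boundary_dart S ha hx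
    exact ⟨d.fst, d.snd, d.adj, hd, fun h => hd' (hC _ h _ (Sym2.mem_mk_right _ _))⟩

structure Ear (G : SimpleGraph V) where
  src : V
  dst : V
  walk : G.Walk src dst

section Ears

variable {ι : Type*}

def earSupport (E : ι → G.Ear) : Set V := {x | ∃ i, x ∈ (E i).walk.support}

def earEdges (E : ι → G.Ear) : Set (Sym2 V) := {e | ∃ i, e ∈ (E i).walk.edges}

theorem mem_earSupport_of_mem_earEdges {E : ι → G.Ear} {e : Sym2 V} (he : e ∈ earEdges E)
    {x : V} (hx : x ∈ e) : x ∈ earSupport E :=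
  let ⟨i, hi⟩ := he; ⟨i, Walk.mem_support_of_mem_edges hi hx⟩

variable {k : ℕ} {E : Fin (k + 1) → G.Ear} {d : G.Ear} {x : V}

theorem exists_lt_last_mem_support_snoc (hx : x ∈ earSupport E) :
    ∃ i < Fin.last (k + 1), x ∈ ((Fin.snoc E d : Fin (k + 2) → G.Ear) i).walk.support :=
  let ⟨i, hi⟩ := hx
  ⟨i.castSucc, Fin.castSucc_lt_last i, by rw [Fin.snoc_castSucc]; exact hi⟩

theorem exists_lt_castSucc_mem_support_snoc {j : Fin (k + 1)}
    (hx : ∃ i < j, x ∈ (E i).walk.support) :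
    ∃ i < j.castSucc, x ∈ ((Fin.snoc E d : Fin (k + 2) → G.Ear) i).walk.support :=
  let ⟨i, hij, hi⟩ := hx
  ⟨i.castSucc, Fin.castSucc_lt_castSucc_iff.2 hij, by rw [Fin.snoc_castSucc]; exact hi⟩

theorem eq_of_mem_edges_snoc (hE : ∀ i j, ∀ e ∈ (E i).walk.edges, e ∈ (E j).walk.edges → i = j)
    (hnew : ∀ e ∈ d.walk.edges, e ∉ earEdges E) {i j : Fin (k + 2)} {e : Sym2 V}
    (hi : e ∈ ((Fin.snoc E d : Fin (k + 2) → G.Ear) i).walk.edges)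
    (hj : e ∈ ((Fin.snoc E d : Fin (k + 2) → G.Ear) j).walk.edges) : i = j := by
  induction i using Fin.lastCases with
  | last =>
    induction j using Fin.lastCases with
    | last => rfl
    | cast j =>
      rw [Fin.snoc_last] at hi
      rw [Fin.snoc_castSucc] at hj
      exact (hnew e hi ⟨j, hj⟩).elim
  | cast i =>
    induction j using Fin.lastCases with
    | last =>
      rw [Fin.snoc_castSucc] at hi
      rw [Fin.snoc_last] at hj
      exact (hnew e hj ⟨i, hi⟩).elim
    | cast j =>
      rw [Fin.snoc_castSucc] at hi hj
      exact congrArg Fin.castSucc (hE i j e hi hj)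

theorem earEdges_subset_earEdges_snoc :
    earEdges E ⊆ earEdges (Fin.snoc E d : Fin (k + 2) → G.Ear) :=
  fun _ ⟨i, hi⟩ => ⟨i.castSucc, by rw [Fin.snoc_castSucc]; exact hi⟩

theorem mem_earEdges_snoc {e : Sym2 V} (he : e ∈ d.walk.edges) :
    e ∈ earEdges (Fin.snoc E d : Fin (k + 2) → G.Ear) :=
  ⟨Fin.last _, by rw [Fin.snoc_last]; exact he⟩

end Ears

/-- An open ear decomposition of the union of the ears;
it is one of `G` when the ears cover `G.edgeSet`. -/
structure IsOpenEarSeq (s t : V) {k : ℕ} (E : Fin (k + 1) → G.Ear) : Prop where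
  isPath : ∀ i, (E i).walk.IsPath
  src_ne_dst : ∀ i, (E i).src ≠ (E i).dst
  eq_of_mem_edges : ∀ i j, ∀ e ∈ (E i).walk.edges, e ∈ (E j).walk.edges → i = j
  src_zero : (E 0).src = s
  dst_zero : (E 0).dst = t
  length_zero : (E 0).walk.length = 1
  notMem_support_of_lt : ∀ j, 0 < j → ∀ x ∈ (E j).walk.support, x ≠ (E j).src →
    x ≠ (E j).dst → ∀ i < j, x ∉ (E i).walk.support
  exists_src_mem : ∀ j, 0 < j → ∃ i < j, (E j).src ∈ (E i).walk.support
  exists_dst_mem : ∀ j, 0 < j → ∃ i < j, (E j).dst ∈ (E i).walk.support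

namespace IsOpenEarSeq

variable {s t : V} {k : ℕ} {E : Fin (k + 1) → G.Ear}

theorem single (hst : G.Adj s t) : IsOpenEarSeq s t (fun _ : Fin 1 => ⟨s, t, hst.toWalk⟩) where
  isPath _ := by simp [hst.ne]
  src_ne_dst _ := hst.ne
  eq_of_mem_edges i j _ _ _ := Fin.subsingleton_one.elim i j
  src_zero := rfl
  dst_zero := rfl
  length_zero := rfl
  notMem_support_of_lt j hj := (hj.ne' (Fin.subsingleton_one.elim _ _)).elim
  exists_src_mem j hj := (hj.ne' (Fin.subsingleton_one.elim _ _)).elim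
  exists_dst_mem j hj := (hj.ne' (Fin.subsingleton_one.elim _ _)).elim

theorem src_mem_earSupport (hE : IsOpenEarSeq s t E) : s ∈ earSupport E :=
  ⟨0, hE.src_zero ▸ (E 0).walk.start_mem_support⟩

theorem dst_mem_earSupport (hE : IsOpenEarSeq s t E) : t ∈ earSupport E :=
  ⟨0, hE.dst_zero ▸ (E 0).walk.end_mem_support⟩

theorem ne (hE : IsOpenEarSeq s t E) : s ≠ t :=
  hE.src_zero ▸ hE.dst_zero ▸ hE.src_ne_dst 0

theorem snoc (hE : IsOpenEarSeq s t E) (d : G.Ear) (hpath : d.walk.IsPath)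
    (hne : d.src ≠ d.dst) (hsrc : d.src ∈ earSupport E) (hdst : d.dst ∈ earSupport E)
    (hint : ∀ x ∈ d.walk.support, x ≠ d.src → x ≠ d.dst → x ∉ earSupport E)
    (hnew : ∀ e ∈ d.walk.edges, e ∉ earEdges E) :
    IsOpenEarSeq s t (Fin.snoc E d : Fin (k + 2) → G.Ear) := by
  have h0 : (Fin.snoc E d : Fin (k + 2) → G.Ear) 0 = E 0 := Fin.snoc_castSucc (i := 0) ..
  refine ⟨fun i => ?_, fun i => ?_, fun _ _ _ hi hj => eq_of_mem_edges_snoc hE.eq_of_mem_edges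
    hnew hi hj, h0 ▸ hE.src_zero, h0 ▸ hE.dst_zero,
    h0 ▸ hE.length_zero, fun j hj x hx hxs hxd i hij => ?_, fun j hj => ?_, fun j hj => ?_⟩
  · induction i using Fin.lastCases with
    | last => rw [Fin.snoc_last]; exact hpath
    | cast i => rw [Fin.snoc_castSucc]; exact hE.isPath i
  · induction i using Fin.lastCases with
    | last => rw [Fin.snoc_last]; exact hne
    | cast i => rw [Fin.snoc_castSucc]; exact hE.src_ne_dst i
  · induction i using Fin.lastCases with
    | last => exact (hij.not_ge (Fin.le_last j)).elim
    | cast i =>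
      rw [Fin.snoc_castSucc]
      induction j using Fin.lastCases with
      | last =>
        rw [Fin.snoc_last] at hx hxs hxd
        exact fun h => hint x hx hxs hxd ⟨i, h⟩
      | cast j =>
        rw [Fin.snoc_castSucc] at hx hxs hxd
        exact hE.notMem_support_of_lt j (Fin.castSucc_pos_iff.1 hj) x hx hxs hxd i
          (Fin.castSucc_lt_castSucc_iff.1 hij)
  · induction j using Fin.lastCases with
    | last => rw [Fin.snoc_last]; exact exists_lt_last_mem_support_snoc hsrc
    | cast j =>
      rw [Fin.snoc_castSucc]
      exact exists_lt_castSucc_mem_support_snoc (hE.exists_src_mem j (Fin.castSucc_pos_iff.1 hj))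
  · induction j using Fin.lastCases with
    | last => rw [Fin.snoc_last]; exact exists_lt_last_mem_support_snoc hdst
    | cast j =>
      rw [Fin.snoc_castSucc]
      exact exists_lt_castSucc_mem_support_snoc (hE.exists_dst_mem j (Fin.castSucc_pos_iff.1 hj))

theorem exists_snoc (hconn : G.Connected)
    (hbi : ∀ v, (G.induce ({v}ᶜ : Set V)).Connected) (hE : IsOpenEarSeq s t E)
    (hcov : ¬ G.edgeSet ⊆ earEdges E) :
    ∃ d : G.Ear, IsOpenEarSeq s t (Fin.snoc E d : Fin (k + 2) → G.Ear) ∧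
      ∃ e ∈ d.walk.edges, e ∉ earEdges E := by
  have hS : ∀ e ∈ earEdges E, ∀ x ∈ e, x ∈ earSupport E :=
    fun _ he _ hx => mem_earSupport_of_mem_earEdges he hx
  obtain ⟨u, v, huv, hu, huvE⟩ := hconn.exists_adj_mem_notMem hS ⟨s, hE.src_mem_earSupport⟩ hcov
  obtain ⟨w₀, hw₀, hw₀u⟩ : ∃ w₀ ∈ earSupport E, w₀ ≠ u := by
    by_cases hsu : s = u
    · exact ⟨t, hE.dst_mem_earSupport, hsu ▸ hE.ne.symm⟩
    · exact ⟨s, hE.src_mem_earSupport, hsu⟩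
  obtain ⟨w, hw, q, hq, huq, hout⟩ :=
    exists_isPath_to_set_of_connected_induce_compl (hbi u) huv.ne' hw₀ hw₀u
  refine ⟨⟨u, w, .cons huv q⟩, hE.snoc _ ((Walk.cons_isPath_iff _ _).2 ⟨hq, huq⟩)
    (fun h : u = w => huq (h ▸ q.end_mem_support)) hu hw ?_ ?_, s(u, v), by simp, huvE⟩
  · simp only [Walk.support_cons, List.mem_cons, forall_eq_or_imp]
    exact ⟨fun h => (h rfl).elim, fun x hx _ hxw => hout x hx hxw⟩
  · simp only [Walk.edges_cons, List.mem_cons, forall_eq_or_imp]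
    refine ⟨huvE, fun e he heE => ?_⟩
    -- an edge of `q` has an end other than `w`, which lies outside `earSupport E`
    induction e using Sym2.ind with | _ z₁ z₂ => ?_
    have hz : z₁ ≠ z₂ := (q.edges_subset_edgeSet he).ne
    by_cases hz₁ : z₁ = w
    · exact hout z₂ (q.snd_mem_support_of_mem_edges he) (hz₁ ▸ hz.symm)
        (hS _ heE _ (Sym2.mem_mk_right _ _))
    · exact hout z₁ (q.fst_mem_support_of_mem_edges he) hz₁ (hS _ heE _ (Sym2.mem_mk_left _ _))

end IsOpenEarSeq

theorem exists_isOpenEarSeq_edgeSet_subset_earEdges [Finite V] (hconn : G.Connected)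
    (hbi : ∀ v, (G.induce ({v}ᶜ : Set V)).Connected) {s t : V} (hst : G.Adj s t) :
    ∃ k, ∃ E : Fin (k + 1) → G.Ear, IsOpenEarSeq s t E ∧ G.edgeSet ⊆ earEdges E := by
  suffices ∀ n k (E : Fin (k + 1) → G.Ear), IsOpenEarSeq s t E →
      (G.edgeSet \ earEdges E).ncard = n → ∃ k, ∃ E : Fin (k + 1) → G.Ear,
        IsOpenEarSeq s t E ∧ G.edgeSet ⊆ earEdges E from
    this _ 0 _ (.single hst) rfl
  intro n
  induction n using Nat.strong_induction_on with | _ n ih => ?_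
  intro k E hE hn
  by_cases hcov : G.edgeSet ⊆ earEdges E
  · exact ⟨k, E, hE, hcov⟩
  obtain ⟨d, hd, e, he, heE⟩ := hE.exists_snoc hconn hbi hcov
  refine ih _ (hn ▸ Set.ncard_lt_ncard ?_ (Set.toFinite _)) _ _ hd rfl
  refine (Set.ssubset_iff_of_subset (Set.sdiff_subset_sdiff_right earEdges_subset_earEdges_snoc)).2
    ⟨e, ⟨d.walk.edges_subset_edgeSet he, heE⟩, fun h => h.2 (mem_earEdges_snoc he)⟩

end SimpleGraph

open SimpleGraph

theorem stmt_9_general {V : Type*} [Fintype V] (G : SimpleGraph V)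
    (hconn : G.Connected)
    (hbi : ∀ v : V, (G.induce ({v}ᶜ : Set V)).Connected)
    (s t : V) (hst : G.Adj s t) :
    ∃ (k : ℕ) (A B : Fin (k + 1) → V) (P : ∀ i : Fin (k + 1), G.Walk (A i) (B i)),
      (∀ i, (P i).IsPath) ∧
      (∀ e : Sym2 V, e ∈ G.edgeSet ↔ ∃ i, e ∈ (P i).edges) ∧
      (∀ i j : Fin (k + 1), ∀ e : Sym2 V, e ∈ (P i).edges → e ∈ (P j).edges → i = j) ∧
      A 0 = s ∧ B 0 = t ∧ (P 0).length = 1 ∧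
      (∀ j : Fin (k + 1), 0 < j →
        (∀ x : V, x ∈ (P j).support → x ≠ A j → x ≠ B j →
          ∀ i : Fin (k + 1), i < j → x ∉ (P i).support) ∧
        (∃ i < j, A j ∈ (P i).support) ∧
        (∃ i < j, B j ∈ (P i).support)) ∧
      (∀ j, A j ≠ B j) := by
  obtain ⟨k, E, hE, hcov⟩ := exists_isOpenEarSeq_edgeSet_subset_earEdges hconn hbi hst
  exact ⟨k, fun i => (E i).src, fun i => (E i).dst, fun i => (E i).walk, hE.isPath,
    fun e => ⟨fun he => hcov he, fun ⟨i, hi⟩ => (E i).walk.edges_subset_edgeSet hi⟩,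
    hE.eq_of_mem_edges, hE.src_zero, hE.dst_zero, hE.length_zero,
    fun j hj => ⟨hE.notMem_support_of_lt j hj, hE.exists_src_mem j hj, hE.exists_dst_mem j hj⟩,
    hE.src_ne_dst⟩

/-- Let `G` be a finite biconnected simple graph on at least 3 vertices and let `{s, t}`
be an edge of `G`.  Then `G` admits an open ear decomposition starting with the edge
`{s, t}`: simple paths `P 0, ..., P k` whose edge sets partition the edge set of `G`,
where `P 0` is the single edge `{s, t}`, and for each `j ≥ 1` the internal vertices of
`P j` avoid all earlier ears, each endpoint of `P j` lies on some earlier ear, and the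
two endpoints of `P j` are distinct. -/
theorem stmt_9 {V : Type*} [Fintype V] [DecidableEq V] (G : SimpleGraph V)
    (hconn : G.Connected)
    (hbi : ∀ v : V, (G.induce ({v}ᶜ : Set V)).Connected)
    (hcard : 3 ≤ Fintype.card V)
    (s t : V) (hst : G.Adj s t) :
    ∃ (k : ℕ) (A B : Fin (k + 1) → V) (P : ∀ i : Fin (k + 1), G.Walk (A i) (B i)),
      (∀ i, (P i).IsPath) ∧
      (∀ e : Sym2 V, e ∈ G.edgeSet ↔ ∃ i, e ∈ (P i).edges) ∧
      (∀ i j : Fin (k + 1), ∀ e : Sym2 V, e ∈ (P i).edges → e ∈ (P j).edges → i = j) ∧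
      A 0 = s ∧ B 0 = t ∧ (P 0).length = 1 ∧
      (∀ j : Fin (k + 1), 0 < j →
        (∀ x : V, x ∈ (P j).support → x ≠ A j → x ≠ B j →
          ∀ i : Fin (k + 1), i < j → x ∉ (P i).support) ∧
        (∃ i < j, A j ∈ (P i).support) ∧
        (∃ i < j, B j ∈ (P i).support)) ∧
      (∀ j, A j ≠ B j) :=
  stmt_9_general G hconn hbi s t hst
end
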